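/- Let G be a finite group, α : G × G → ℂˣ a 2-cocycle such that the twisted group algebra ℂ^αG is a simple ring, and let N ⊴ G be a normal subgroup such that the restriction of the cohomology class of α to N is trivial, i.e. there exists β : N → ℂˣ with α(n,n') = β(n)·β(n')·β(nn')⁻¹ for all n, n' ∈ N. Then every simple ℂ^αN-module is 1-dimensional, and N is abelian. -/

import Mathlib

/-- A 2-cocycle on `G` with values in `ℂˣ`. -/
def IsTwoCocycle {G : Type} [Group G] (α : G → G → ℂˣ) : Prop :=
  ∀ g h k : G, α g h * α (g * h) k = α h k * α g (h * k)

/-- A twisted group algebra `ℂ^αG`: a ℂ-algebra with a basis `u_g` of invertible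
elements satisfying `u_g * u_h = α g h • u_{gh}`. -/
structure TwistedGroupAlgebra (G : Type) [Group G] (α : G → G → ℂˣ) where
  carrier : Type
  [ringStr : Ring carrier]
  [algStr : Algebra ℂ carrier]
  u : G → carrierˣ
  basis : Module.Basis G ℂ carrier
  basis_eq : ∀ g : G, basis g = (u g : carrier)
  u_mul : ∀ g h : G, (u g : carrier) * (u h : carrier) = (α g h : ℂ) • (u (g * h) : carrier)

attribute [instance] TwistedGroupAlgebra.ringStr TwistedGroupAlgebra.algStr

namespace TwistedGroupAlgebra

variable {G : Type} [Group G] {α : G → G → ℂˣ}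

/-- The subalgebra `ℂ^αN ⊆ ℂ^αG` spanned by the `u_n`, `n ∈ N`. -/
def sub (A : TwistedGroupAlgebra G α) (N : Subgroup G) : Subalgebra ℂ A.carrier :=
  Algebra.adjoin ℂ ((fun g : G => (A.u g : A.carrier)) '' (N : Set G))

/-- The dimension over `ℂ` of a `ℂ^αN`-module. -/
noncomputable def dimC (A : TwistedGroupAlgebra G α) (N : Subgroup G) (M : Type)
    [AddCommGroup M] [Module (A.sub N) M] : ℕ :=
  Module.finrank ℂ (RestrictScalars ℂ (A.sub N) M)

/-- `TwistIso A N g M M'` says that `M'` is isomorphic to the twist `{}^{g}M` of the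
`ℂ^αN`-module `M`, i.e. there is an additive bijection `e : M' → M` with
`e (a • m') = (u_g⁻¹ a u_g) • e m'` for all `a ∈ ℂ^αN`. -/
def TwistIso (A : TwistedGroupAlgebra G α) (N : Subgroup G) (g : G)
    (M M' : Type) [AddCommGroup M] [Module (A.sub N) M]
    [AddCommGroup M'] [Module (A.sub N) M'] : Prop :=
  ∃ e : M' ≃+ M, ∀ (a : A.sub N) (m' : M')
    (h : (((A.u g)⁻¹ : A.carrierˣ) : A.carrier) * (a : A.carrier) * (A.u g : A.carrier) ∈
      A.sub N),
    e (a • m') =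
      (⟨(((A.u g)⁻¹ : A.carrierˣ) : A.carrier) * (a : A.carrier) * (A.u g : A.carrier), h⟩ :
        A.sub N) • e m'

/-- The action of `G/N` on isomorphism classes of simple `ℂ^αN`-modules is transitive. -/
def TransAction (A : TwistedGroupAlgebra G α) (N : Subgroup G) : Prop :=
  ∀ (M : Type) [AddCommGroup M] [Module (A.sub N) M]
    (M' : Type) [AddCommGroup M'] [Module (A.sub N) M'],
    IsSimpleModule (A.sub N) M → IsSimpleModule (A.sub N) M' →
    ∃ g : G, TwistIso A N g M M'

/-- The action of `G/N` on isomorphism classes of simple `ℂ^αN`-modules is free. -/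
def FreeAction (A : TwistedGroupAlgebra G α) (N : Subgroup G) : Prop :=
  ∀ (M : Type) [AddCommGroup M] [Module (A.sub N) M], IsSimpleModule (A.sub N) M →
    ∀ g : G, TwistIso A N g M M → g ∈ N

/-- The restriction of the cohomology class of `α` to the subgroup `N` is trivial. -/
def RestTrivial (α : G → G → ℂˣ) (N : Subgroup G) : Prop :=
  ∃ β : N → ℂˣ, ∀ n n' : N, α n n' = β n * β n' * (β (n * n'))⁻¹

end TwistedGroupAlgebra

/-!
Untwisting by `β`, the elements `v n = β(n)⁻¹ • u n` multiply like `N`, so `e = ∑ n, v n` is a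
nonzero element with `u n * e = β(n) • e`. By normality `u n * u g` is a multiple of
`u g * u (g⁻¹ n g)`, so each `u g * e` is a common eigenvector of left multiplication by
`ℂ^αN`. Hence every commutator `x * y - y * x` of `ℂ^αN` annihilates `A * e`, i.e. kills the
two-sided ideal generated by `e`, which is everything because `ℂ^αG` is simple. So `ℂ^αN` is
commutative: comparing `u x * u y = u y * u x` in the basis shows `N` abelian, and Schur's lemma
over `ℂ` makes its simple modules one-dimensional.
-/

theorem IsSimpleRing.eq_zero_of_forall_mul_mul_eq_zero {R : Type*} [Ring R] [IsSimpleRing R]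
    {w e : R} (he : e ≠ 0) (h : ∀ a, w * a * e = 0) : w = 0 := by
  let I : TwoSidedIdeal R := TwoSidedIdeal.mk' {z | ∀ a, w * a * z = 0}
    (fun a => by simp)
    (fun hx hy a => by simp only [mul_add, hx a, hy a, add_zero])
    (fun hx a => by simp only [mul_neg, hx a, neg_zero])
    (fun {x y} hy a => by rw [← mul_assoc, mul_assoc w, hy])
    (fun {x y} hx a => by rw [← mul_assoc, hx, zero_mul])
  have hone : (1 : R) ∈ I := IsSimpleRing.one_mem_of_ne_zero_mem I he (by simpa [I] using h)
  simpa using hone 1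

section LeftEigen

variable {R A : Type*} [CommSemiring R] [Semiring A] [Algebra R A]

variable (R) in
def leftEigenSubalgebra (e : A) : Subalgebra R A where
  carrier := {x | ∃ c : R, x * e = c • e}
  mul_mem' := by
    rintro x y ⟨c, hc⟩ ⟨d, hd⟩
    exact ⟨c * d, by rw [mul_assoc, hd, mul_smul_comm, hc, smul_smul, mul_comm]⟩
  add_mem' := by
    rintro x y ⟨c, hc⟩ ⟨d, hd⟩
    exact ⟨c + d, by rw [add_mul, hc, hd, add_smul]⟩
  algebraMap_mem' c := ⟨c, by rw [Algebra.smul_def]⟩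

lemma mul_mul_eq_of_mem_leftEigenSubalgebra {e x y : A} (hx : x ∈ leftEigenSubalgebra R e)
    (hy : y ∈ leftEigenSubalgebra R e) : x * y * e = y * x * e := by
  obtain ⟨c, hc⟩ := hx
  obtain ⟨d, hd⟩ := hy
  rw [mul_assoc, hd, mul_smul_comm, hc, mul_assoc, hc, mul_smul_comm, hd, smul_smul, smul_smul,
    mul_comm]

end LeftEigen

lemma mul_sum_eq_sum_of_map_mul {H M : Type*} [Group H] [Fintype H]
    [NonUnitalNonAssocSemiring M]
    (v : H → M) (hv : ∀ a b, v a * v b = v (a * b)) (h : H) : v h * ∑ a, v a = ∑ a, v a := by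
  simp only [Finset.mul_sum, hv]
  exact Equiv.sum_comp (Equiv.mulLeft h) v

namespace TwistedGroupAlgebra

variable {G : Type} [Group G] {α : G → G → ℂˣ} (A : TwistedGroupAlgebra G α)

lemma u_mem_sub {N : Subgroup G} {n : G} (hn : n ∈ N) : (A.u n : A.carrier) ∈ A.sub N :=
  Algebra.subset_adjoin ⟨n, hn, rfl⟩

lemma u_mul_u_of_mul_eq_mul {g h k : G} (hk : h * g = g * k) :
    (A.u h : A.carrier) * A.u g =
      ((α h g : ℂ) * (α g k : ℂ)⁻¹) • ((A.u g : A.carrier) * A.u k) := by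
  rw [A.u_mul, A.u_mul, hk, smul_smul, inv_mul_cancel_right₀ (α g k).ne_zero]

lemma eq_of_smul_u_eq_smul_u {g h : G} {c d : ℂ} (hc : c ≠ 0)
    (hcd : c • (A.u g : A.carrier) = d • (A.u h : A.carrier)) : g = h := by
  classical
  by_contra hgh
  have := congrArg (fun z => A.basis.repr z g) hcd
  simp [← A.basis_eq, Ne.symm hgh, hc] at this

section Untwist

variable {N : Subgroup G} (β : N → ℂˣ)

noncomputable def untwistedU (n : N) : A.carrier := ((β n)⁻¹ : ℂ) • A.u n

lemma untwistedU_mul (hβ : ∀ n n' : N, α n n' = β n * β n' * (β (n * n'))⁻¹) (n m : N) :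
    A.untwistedU β n * A.untwistedU β m = A.untwistedU β (n * m) := by
  simp only [untwistedU, smul_mul_smul, A.u_mul, smul_smul, hβ, Units.val_mul,
    Units.val_inv_eq_inv_val]
  congr 1
  field_simp

variable [Fintype N]

noncomputable def untwistedSum : A.carrier := ∑ n, A.untwistedU β n

lemma untwistedSum_ne_zero : A.untwistedSum β ≠ 0 := by
  have hli := A.basis.linearIndependent.comp ((↑) : N → G) Subtype.val_injective
  intro h0
  have := Fintype.linearIndependent_iff.mp hli (fun n => ((β n)⁻¹ : ℂ))
    (by simpa [untwistedSum, untwistedU, A.basis_eq] using h0) 1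
  simp at this

lemma u_mul_untwistedSum (hβ : ∀ n n' : N, α n n' = β n * β n' * (β (n * n'))⁻¹) (n : N) :
    (A.u n : A.carrier) * A.untwistedSum β = (β n : ℂ) • A.untwistedSum β := by
  have hu : (A.u n : A.carrier) = (β n : ℂ) • A.untwistedU β n := by
    simp [untwistedU, smul_smul]
  rw [hu, smul_mul_assoc, untwistedSum, mul_sum_eq_sum_of_map_mul _ (A.untwistedU_mul β hβ)]

lemma sub_le_leftEigenSubalgebra [N.Normal]
    (hβ : ∀ n n' : N, α n n' = β n * β n' * (β (n * n'))⁻¹) (g : G) :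
    A.sub N ≤ leftEigenSubalgebra ℂ ((A.u g : A.carrier) * A.untwistedSum β) := by
  refine Algebra.adjoin_le ?_
  rintro _ ⟨n, hn, rfl⟩
  set k : G := g⁻¹ * n * g
  have hk : k ∈ N := by simpa using Subgroup.Normal.conj_mem ‹_› n hn g⁻¹
  have hkβ : (A.u k : A.carrier) * A.untwistedSum β =
      (β ⟨k, hk⟩ : ℂ) • A.untwistedSum β :=
    A.u_mul_untwistedSum β hβ ⟨k, hk⟩
  refine ⟨(α n g : ℂ) * (α g k : ℂ)⁻¹ * β ⟨k, hk⟩, ?_⟩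
  have hnk : n * g = g * k := by simp [k, ← mul_assoc]
  rw [← mul_assoc, A.u_mul_u_of_mul_eq_mul hnk, smul_mul_assoc, mul_assoc, hkβ, mul_smul_comm,
    smul_smul]

end Untwist

lemma mul_comm_of_mem_sub [Fintype G] [IsSimpleRing A.carrier] {N : Subgroup G} [N.Normal]
    {β : N → ℂˣ} (hβ : ∀ n n' : N, α n n' = β n * β n' * (β (n * n'))⁻¹) {x y : A.carrier}
    (hx : x ∈ A.sub N) (hy : y ∈ A.sub N) : x * y = y * x := by
  have := Fintype.ofFinite N
  refine sub_eq_zero.mp <|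
    IsSimpleRing.eq_zero_of_forall_mul_mul_eq_zero (A.untwistedSum_ne_zero β) fun a => ?_
  rw [← A.basis.sum_repr a, Finset.mul_sum, Finset.sum_mul]
  refine Finset.sum_eq_zero fun g _ => ?_
  have hle := A.sub_le_leftEigenSubalgebra β hβ g
  rw [mul_smul_comm, smul_mul_assoc, A.basis_eq, mul_assoc, sub_mul,
    mul_mul_eq_of_mem_leftEigenSubalgebra (hle hx) (hle hy), sub_self, smul_zero]

lemma mul_comm_of_u_mul_comm {x y : G} (h : (A.u x : A.carrier) * A.u y = A.u y * A.u x) :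
    x * y = y * x :=
  A.eq_of_smul_u_eq_smul_u (α x y).ne_zero (by rwa [A.u_mul, A.u_mul] at h)

lemma dimC_eq_one [Finite G] (N : Subgroup G) [IsMulCommutative (A.sub N)] (M : Type)
    [AddCommGroup M] [Module (A.sub N) M] [IsSimpleModule (A.sub N) M] : A.dimC N M = 1 := by
  let : Module ℂ M := Module.compHom M (algebraMap ℂ (A.sub N))
  have : IsScalarTower ℂ (A.sub N) M := ⟨fun c b m => by
    show (c • b) • m = algebraMap ℂ (A.sub N) c • b • m
    rw [Algebra.smul_def, mul_smul]⟩
  have : Module.Finite (A.sub N) M := inferInstance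
  have : FiniteDimensional ℂ A.carrier := Module.Finite.of_basis A.basis
  have : FiniteDimensional ℂ M := Module.Finite.trans (A.sub N) M
  exact IsSimpleModule.finrank_eq_one_of_isMulCommutative (A.sub N) M ℂ

end TwistedGroupAlgebra

open TwistedGroupAlgebra in
theorem stmt7_general {G : Type} [Group G] [Fintype G] (α : G → G → ℂˣ)
    (A : TwistedGroupAlgebra G α) (hA : IsSimpleRing A.carrier)
    (N : Subgroup G) [N.Normal]
    (htriv : ∃ β : N → ℂˣ, ∀ n n' : N, α n n' = β n * β n' * (β (n * n'))⁻¹) :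
    (∀ (M : Type) [AddCommGroup M] [Module (A.sub N) M],
      IsSimpleModule (A.sub N) M → dimC A N M = 1) ∧
    ∀ x ∈ N, ∀ y ∈ N, x * y = y * x := by
  obtain ⟨β, hβ⟩ := htriv
  have hcomm {x y : A.carrier} (hx : x ∈ A.sub N) (hy : y ∈ A.sub N) : x * y = y * x :=
    A.mul_comm_of_mem_sub hβ hx hy
  refine ⟨fun M _ _ _ => ?_, fun x hx y hy =>
    A.mul_comm_of_u_mul_comm (hcomm (A.u_mem_sub hx) (A.u_mem_sub hy))⟩
  have : IsMulCommutative (A.sub N) := ⟨⟨fun a b => Subtype.ext (hcomm a.2 b.2)⟩⟩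
  exact A.dimC_eq_one N M

open TwistedGroupAlgebra in
/-- If `ℂ^αG` is a simple ring and `N ⊴ G` is isotropic (the
restriction of the class of `α` to `N` is trivial), then every simple `ℂ^αN`-module is
1-dimensional and `N` is abelian. -/
theorem stmt7 {G : Type} [Group G] [Fintype G] (α : G → G → ℂˣ) (hα : IsTwoCocycle α)
    (A : TwistedGroupAlgebra G α) (hA : IsSimpleRing A.carrier)
    (N : Subgroup G) [N.Normal]
    (htriv : ∃ β : N → ℂˣ, ∀ n n' : N, α n n' = β n * β n' * (β (n * n'))⁻¹) :
    (∀ (M : Type) [AddCommGroup M] [Module (A.sub N) M],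
      IsSimpleModule (A.sub N) M → dimC A N M = 1) ∧
    ∀ x ∈ N, ∀ y ∈ N, x * y = y * x :=
  stmt7_general α A hA N htriv
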